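/- Let θ ∈ (0,1) be irrational, θ_k = q_k θ − p_k. Suppose (b_h)_{h≥1} is a sequence of integers with 0 ≤ b₁ ≤ a₁ − 1, 0 ≤ b_h ≤ a_h for all h ≥ 2, and b_h = 0 whenever b_{h+1} = a_{h+1}. Then for every k ≥ 1, the tail σ_k = Σ_{h≥k} b_{h+1} θ_h satisfies |σ_k| ≤ |θ_{k−1}|, with strict inequality unless the tail (b_{k+1}, b_{k+2}, …) equals (a_{k+1}, 0, a_{k+3}, 0, …) or (0, a_{k+2}, 0, a_{k+4}, …). -/

import Mathlib

/-!
With `x₀ = θ` and `xₙ₊₁ = {1 / xₙ}` the Gauss iterates, `θₙ = (-1)ⁿ x₀ x₁ ⋯ xₙ`. Hence the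
terms of `σ_k` have sign `(-1)^(k+j)`, and `σ_k = ±(E - O)` where `E, O ≥ 0` collect the
terms with `j` even and odd. The identity `a_{n+2} |θ_{n+1}| = |θ_n| - |θ_{n+2}|` telescopes,
so the digit bounds `b_h ≤ a_h` give `E ≤ |θ_{k-1}|` and `O ≤ |θ_k| < |θ_{k-1}|`. Equality
`|σ_k| = |θ_{k-1}|` therefore forces `E = |θ_{k-1}|` and `O = 0`, that is
`b_{k+1+2j} = a_{k+1+2j}` and `b_{k+2+2j} = 0` for all `j`.
-/

/-- Iterated Gauss map: the fractional parts appearing in the continued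
fraction algorithm for `θ ∈ (0,1)`. -/
noncomputable def gaussIter (θ : ℝ) : ℕ → ℝ
  | 0 => θ
  | n + 1 => 1 / gaussIter θ n - ⌊1 / gaussIter θ n⌋

/-- The `k`-th partial quotient `a_k` (for `k ≥ 1`) of `θ = [0; a₁, a₂, …]`. -/
noncomputable def cfa (θ : ℝ) (k : ℕ) : ℤ := ⌊1 / gaussIter θ (k - 1)⌋

/-- Numerators `p_k` of the convergents of `θ`. -/
noncomputable def cfp (θ : ℝ) : ℕ → ℤ
  | 0 => 0
  | 1 => 1
  | k + 2 => cfa θ (k + 2) * cfp θ (k + 1) + cfp θ k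

/-- Denominators `q_k` of the convergents of `θ`. -/
noncomputable def cfq (θ : ℝ) : ℕ → ℤ
  | 0 => 1
  | 1 => cfa θ 1
  | k + 2 => cfa θ (k + 2) * cfq θ (k + 1) + cfq θ k

/-- `θ_k = q_k θ - p_k`. -/
noncomputable def cftheta (θ : ℝ) (k : ℕ) : ℝ := (cfq θ k : ℝ) * θ - (cfp θ k : ℝ)

open Finset Filter Topology

lemma gaussIter_succ_eq_fract (θ : ℝ) (n : ℕ) :
    gaussIter θ (n + 1) = Int.fract (1 / gaussIter θ n) := rfl

lemma irrational_gaussIter {θ : ℝ} (hirr : Irrational θ) (n : ℕ) :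
    Irrational (gaussIter θ n) := by
  induction n with
  | zero => exact hirr
  | succ n ih =>
    rw [gaussIter_succ_eq_fract, Int.fract, one_div]
    exact ih.inv.sub_intCast _

lemma gaussIter_succ_eq (θ : ℝ) (n : ℕ) :
    gaussIter θ (n + 1) = 1 / gaussIter θ n - cfa θ (n + 1) := rfl

lemma gaussIter_succ_pos {θ : ℝ} (hirr : Irrational θ) (n : ℕ) : 0 < gaussIter θ (n + 1) := by
  rw [gaussIter_succ_eq_fract, Int.fract_pos]
  simpa [one_div] using ((irrational_gaussIter hirr n).inv.ne_int _)

lemma gaussIter_succ_lt_one (θ : ℝ) (n : ℕ) : gaussIter θ (n + 1) < 1 :=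
  Int.fract_lt_one _

lemma gaussIter_pos {θ : ℝ} (hirr : Irrational θ) (h0 : 0 < θ) : ∀ n, 0 < gaussIter θ n
  | 0 => h0
  | n + 1 => gaussIter_succ_pos hirr n

lemma one_le_cfa_add_two {θ : ℝ} (hirr : Irrational θ) (n : ℕ) : 1 ≤ cfa θ (n + 2) := by
  have hpos := gaussIter_succ_pos hirr n
  have hlt := gaussIter_succ_lt_one θ n
  rw [show cfa θ (n + 2) = ⌊1 / gaussIter θ (n + 1)⌋ from rfl, Int.le_floor, Int.cast_one,
    le_div_iff₀ hpos]
  linarith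

lemma cftheta_add_two (θ : ℝ) (n : ℕ) :
    cftheta θ (n + 2) = cfa θ (n + 2) * cftheta θ (n + 1) + cftheta θ n := by
  simp only [cftheta, cfp, cfq]
  push_cast
  ring

noncomputable def gaussProd (θ : ℝ) (n : ℕ) : ℝ := ∏ i ∈ range (n + 1), gaussIter θ i

lemma gaussProd_zero (θ : ℝ) : gaussProd θ 0 = θ := by simp [gaussProd, gaussIter]

lemma gaussProd_succ (θ : ℝ) (n : ℕ) :
    gaussProd θ (n + 1) = gaussProd θ n * gaussIter θ (n + 1) :=
  prod_range_succ _ _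

lemma gaussProd_pos {θ : ℝ} (hirr : Irrational θ) (h0 : 0 < θ) (n : ℕ) : 0 < gaussProd θ n :=
  prod_pos fun i _ => gaussIter_pos hirr h0 i

lemma gaussProd_succ_lt {θ : ℝ} (hirr : Irrational θ) (h0 : 0 < θ) (n : ℕ) :
    gaussProd θ (n + 1) < gaussProd θ n := by
  rw [gaussProd_succ]
  exact mul_lt_of_lt_one_right (gaussProd_pos hirr h0 n) (gaussIter_succ_lt_one θ n)

lemma gaussProd_add_two {θ : ℝ} (hirr : Irrational θ) (n : ℕ) :
    gaussProd θ (n + 2) = gaussProd θ n - cfa θ (n + 2) * gaussProd θ (n + 1) := by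
  have hx := (gaussIter_succ_pos hirr n).ne'
  rw [gaussProd_succ, gaussIter_succ_eq, gaussProd_succ]
  field_simp

lemma cftheta_eq_neg_one_pow_mul_gaussProd {θ : ℝ} (hirr : Irrational θ) (n : ℕ) :
    cftheta θ n = (-1) ^ n * gaussProd θ n := by
  induction n using Nat.twoStepInduction with
  | zero => simp [cftheta, cfp, cfq, gaussProd_zero]
  | one =>
    have hθ := hirr.ne_zero
    rw [gaussProd_succ, gaussProd_zero, gaussIter_succ_eq]
    simp only [cftheta, cfp, cfq, gaussIter]
    field_simp
    ring
  | more n ih ih1 =>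
    rw [cftheta_add_two, ih, ih1, gaussProd_add_two hirr]
    ring

lemma abs_cftheta {θ : ℝ} (hirr : Irrational θ) (h0 : 0 < θ) (n : ℕ) :
    |cftheta θ n| = gaussProd θ n := by
  rw [cftheta_eq_neg_one_pow_mul_gaussProd hirr, abs_mul, abs_neg_one_pow, one_mul,
    abs_of_pos (gaussProd_pos hirr h0 n)]

lemma gaussProd_add_two_lt_half {θ : ℝ} (hirr : Irrational θ) (h0 : 0 < θ) (n : ℕ) :
    gaussProd θ (n + 2) < gaussProd θ n / 2 := by
  have ha : (1 : ℝ) ≤ cfa θ (n + 2) := by exact_mod_cast one_le_cfa_add_two hirr n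
  have hrec := gaussProd_add_two hirr n
  have hdec := gaussProd_succ_lt hirr h0 (n + 1)
  nlinarith [gaussProd_pos hirr h0 (n + 1)]

lemma tendsto_gaussProd_add_two_mul {θ : ℝ} (hirr : Irrational θ) (h0 : 0 < θ) (c : ℕ) :
    Tendsto (fun j => gaussProd θ (c + 2 * j)) atTop (𝓝 0) := by
  have hgeom : ∀ j, gaussProd θ (c + 2 * j) ≤ gaussProd θ c * (1 / 2) ^ j := by
    intro j
    induction j with
    | zero => simp
    | succ j ih =>
      calc gaussProd θ (c + 2 * (j + 1)) ≤ gaussProd θ (c + 2 * j) / 2 :=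
            (gaussProd_add_two_lt_half hirr h0 _).le
        _ ≤ gaussProd θ c * (1 / 2) ^ (j + 1) := by rw [pow_succ]; linarith
  have hlim : Tendsto (fun j => gaussProd θ c * (1 / 2 : ℝ) ^ j) atTop (𝓝 0) := by
    simpa using (tendsto_pow_atTop_nhds_zero_of_lt_one (by norm_num : (0 : ℝ) ≤ 1 / 2)
      (by norm_num)).const_mul (gaussProd θ c)
  exact squeeze_zero (fun j => (gaussProd_pos hirr h0 _).le) hgeom hlim

lemma hasSum_sub_succ_of_tendsto_zero {g : ℕ → ℝ} (hanti : ∀ j, g (j + 1) ≤ g j)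
    (hlim : Tendsto g atTop (𝓝 0)) : HasSum (fun j => g j - g (j + 1)) (g 0) := by
  rw [hasSum_iff_tendsto_nat_of_nonneg fun j => sub_nonneg.2 (hanti j)]
  simp_rw [sum_range_sub']
  simpa using tendsto_const_nhds.sub hlim

lemma hasSum_cfa_mul_gaussProd {θ : ℝ} (hirr : Irrational θ) (h0 : 0 < θ) (c : ℕ) :
    HasSum (fun j => (cfa θ (c + 2 + 2 * j) : ℝ) * gaussProd θ (c + 1 + 2 * j))
      (gaussProd θ c) := by
  have hterm : ∀ j, (cfa θ (c + 2 + 2 * j) : ℝ) * gaussProd θ (c + 1 + 2 * j)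
      = gaussProd θ (c + 2 * j) - gaussProd θ (c + 2 * (j + 1)) := fun j => by
    rw [show c + 2 * (j + 1) = c + 2 * j + 2 by ring, gaussProd_add_two hirr]
    ring_nf
  simp_rw [hterm]
  simpa using hasSum_sub_succ_of_tendsto_zero
    (fun j => (gaussProd_add_two_lt_half hirr h0 (c + 2 * j)).le.trans
      (half_le_self (gaussProd_pos hirr h0 _).le))
    (tendsto_gaussProd_add_two_mul hirr h0 c)

noncomputable def halfTail (θ : ℝ) (b : ℕ → ℕ) (c : ℕ) : ℝ :=
  ∑' j, (b (c + 2 + 2 * j) : ℝ) * gaussProd θ (c + 1 + 2 * j)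

section HalfTail

variable {θ : ℝ} {b : ℕ → ℕ} {c : ℕ}

lemma digit_mul_gaussProd_le (hirr : Irrational θ) (h0 : 0 < θ)
    (hb : ∀ h, c + 2 ≤ h → (b h : ℤ) ≤ cfa θ h) (j : ℕ) :
    (b (c + 2 + 2 * j) : ℝ) * gaussProd θ (c + 1 + 2 * j)
      ≤ cfa θ (c + 2 + 2 * j) * gaussProd θ (c + 1 + 2 * j) := by
  gcongr
  · exact (gaussProd_pos hirr h0 _).le
  · exact_mod_cast hb _ (by omega)

lemma summable_digit_mul_gaussProd (hirr : Irrational θ) (h0 : 0 < θ)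
    (hb : ∀ h, c + 2 ≤ h → (b h : ℤ) ≤ cfa θ h) :
    Summable fun j => (b (c + 2 + 2 * j) : ℝ) * gaussProd θ (c + 1 + 2 * j) :=
  (hasSum_cfa_mul_gaussProd hirr h0 c).summable.of_nonneg_of_le
    (fun _ => mul_nonneg (Nat.cast_nonneg _) (gaussProd_pos hirr h0 _).le)
    (digit_mul_gaussProd_le hirr h0 hb)

lemma halfTail_nonneg (hirr : Irrational θ) (h0 : 0 < θ) : 0 ≤ halfTail θ b c :=
  tsum_nonneg fun _ => mul_nonneg (Nat.cast_nonneg _) (gaussProd_pos hirr h0 _).le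

lemma halfTail_le (hirr : Irrational θ) (h0 : 0 < θ)
    (hb : ∀ h, c + 2 ≤ h → (b h : ℤ) ≤ cfa θ h) : halfTail θ b c ≤ gaussProd θ c :=
  hasSum_le (digit_mul_gaussProd_le hirr h0 hb)
    (summable_digit_mul_gaussProd hirr h0 hb).hasSum (hasSum_cfa_mul_gaussProd hirr h0 c)

lemma halfTail_lt (hirr : Irrational θ) (h0 : 0 < θ)
    (hb : ∀ h, c + 2 ≤ h → (b h : ℤ) ≤ cfa θ h) {j : ℕ}
    (hj : (b (c + 2 + 2 * j) : ℤ) < cfa θ (c + 2 + 2 * j)) :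
    halfTail θ b c < gaussProd θ c :=
  hasSum_lt (digit_mul_gaussProd_le hirr h0 hb)
    (mul_lt_mul_of_pos_right (by exact_mod_cast hj) (gaussProd_pos hirr h0 _))
    (summable_digit_mul_gaussProd hirr h0 hb).hasSum (hasSum_cfa_mul_gaussProd hirr h0 c)

lemma halfTail_pos (hirr : Irrational θ) (h0 : 0 < θ)
    (hb : ∀ h, c + 2 ≤ h → (b h : ℤ) ≤ cfa θ h) {j : ℕ} (hj : b (c + 2 + 2 * j) ≠ 0) :
    0 < halfTail θ b c :=
  (summable_digit_mul_gaussProd hirr h0 hb).tsum_pos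
    (fun _ => mul_nonneg (Nat.cast_nonneg _) (gaussProd_pos hirr h0 _).le) j
    (mul_pos (by exact_mod_cast Nat.pos_of_ne_zero hj) (gaussProd_pos hirr h0 _))

lemma hasSum_digit_mul_cftheta (hirr : Irrational θ) (h0 : 0 < θ)
    (hb : ∀ h, c + 2 ≤ h → (b h : ℤ) ≤ cfa θ h) :
    HasSum (fun j => (b (c + 2 + j) : ℝ) * cftheta θ (c + 1 + j))
      ((-1) ^ (c + 1) * (halfTail θ b c - halfTail θ b (c + 1))) := by
  have hb' : ∀ h, c + 1 + 2 ≤ h → (b h : ℤ) ≤ cfa θ h := fun h hh => hb h (by omega)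
  have hsign : ∀ n j : ℕ, (-1 : ℝ) ^ (n + 2 * j) = (-1) ^ n := fun n j => by
    rw [pow_add, pow_mul, neg_one_sq, one_pow, mul_one]
  have heven : HasSum (fun j => (b (c + 2 + 2 * j) : ℝ) * cftheta θ (c + 1 + 2 * j))
      ((-1) ^ (c + 1) * halfTail θ b c) := by
    refine ((summable_digit_mul_gaussProd hirr h0 hb).hasSum.mul_left _).congr_fun fun j => ?_
    rw [cftheta_eq_neg_one_pow_mul_gaussProd hirr, hsign]
    ring
  have hodd : HasSum (fun j => (b (c + 2 + (2 * j + 1)) : ℝ) * cftheta θ (c + 1 + (2 * j + 1)))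
      ((-1) ^ (c + 2) * halfTail θ b (c + 1)) := by
    refine ((summable_digit_mul_gaussProd hirr h0 hb').hasSum.mul_left _).congr_fun fun j => ?_
    rw [show c + 2 + (2 * j + 1) = c + 1 + 2 + 2 * j by ring,
      show c + 1 + (2 * j + 1) = c + 2 + 2 * j by ring,
      cftheta_eq_neg_one_pow_mul_gaussProd hirr, hsign]
    ring
  convert HasSum.even_add_odd (f := fun j => (b (c + 2 + j) : ℝ) * cftheta θ (c + 1 + j))
    heven hodd using 1
  ring

end HalfTail

theorem ostrowski_tail_bound_general (θ : ℝ) (hirr : Irrational θ) (h0 : 0 < θ)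
    (b : ℕ → ℕ)
    (hb : ∀ h : ℕ, 2 ≤ h → (b h : ℤ) ≤ cfa θ h) :
    ∀ k : ℕ, 1 ≤ k → ∃ σ : ℝ,
      HasSum (fun j : ℕ => (b (k + 1 + j) : ℝ) * cftheta θ (k + j)) σ ∧
      |σ| ≤ |cftheta θ (k - 1)| ∧
      ((¬ (∀ j : ℕ, (b (k + 1 + 2 * j) : ℤ) = cfa θ (k + 1 + 2 * j) ∧ b (k + 2 + 2 * j) = 0)) ∧
       (¬ (∀ j : ℕ, b (k + 1 + 2 * j) = 0 ∧ (b (k + 2 + 2 * j) : ℤ) = cfa θ (k + 2 + 2 * j))) →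
        |σ| < |cftheta θ (k - 1)|) := by
  rintro k hk
  obtain ⟨c, rfl⟩ : ∃ c, k = c + 1 := ⟨k - 1, by omega⟩
  have hbc : ∀ h, c + 2 ≤ h → (b h : ℤ) ≤ cfa θ h := fun h hh => hb h (by omega)
  have hbc' : ∀ h, c + 1 + 2 ≤ h → (b h : ℤ) ≤ cfa θ h := fun h hh => hb h (by omega)
  have hE := halfTail_nonneg (b := b) (c := c) hirr h0
  have hO := halfTail_nonneg (b := b) (c := c + 1) hirr h0
  have hEle := halfTail_le hirr h0 hbc
  have hOle := (halfTail_le hirr h0 hbc').trans_lt (gaussProd_succ_lt hirr h0 c)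
  refine ⟨_, hasSum_digit_mul_cftheta hirr h0 hbc, ?_, ?_⟩ <;>
    rw [abs_mul, abs_neg_one_pow, one_mul, Nat.add_sub_cancel, abs_cftheta hirr h0]
  · exact abs_sub_le_iff.2 ⟨by linarith, by linarith⟩
  · rintro ⟨hnot, -⟩
    obtain ⟨j, hj⟩ := not_forall.1 hnot
    refine abs_sub_lt_iff.2 ⟨?_, by linarith⟩
    rcases (hbc (c + 2 + 2 * j) (by omega)).lt_or_eq with hlt | heq
    · linarith [halfTail_lt hirr h0 hbc hlt]
    · linarith [halfTail_pos hirr h0 hbc' (j := j) fun h => hj ⟨heq, h⟩]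

/-- Tail bound for Ostrowski expansions: if `(b_h)` satisfies the Ostrowski digit
rules, then `σ_k = Σ_{h ≥ k} b_{h+1} θ_h` satisfies `|σ_k| ≤ |θ_{k−1}|`, with strict
inequality unless the tail is `(a_{k+1}, 0, a_{k+3}, 0, …)` or `(0, a_{k+2}, 0, a_{k+4}, …)`. -/
theorem ostrowski_tail_bound (θ : ℝ) (hirr : Irrational θ) (h0 : 0 < θ) (h1 : θ < 1)
    (b : ℕ → ℕ)
    (hb1 : (b 1 : ℤ) ≤ cfa θ 1 - 1)
    (hb : ∀ h : ℕ, 2 ≤ h → (b h : ℤ) ≤ cfa θ h)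
    (hrule : ∀ h : ℕ, 1 ≤ h → (b (h + 1) : ℤ) = cfa θ (h + 1) → b h = 0) :
    ∀ k : ℕ, 1 ≤ k → ∃ σ : ℝ,
      HasSum (fun j : ℕ => (b (k + 1 + j) : ℝ) * cftheta θ (k + j)) σ ∧
      |σ| ≤ |cftheta θ (k - 1)| ∧
      ((¬ (∀ j : ℕ, (b (k + 1 + 2 * j) : ℤ) = cfa θ (k + 1 + 2 * j) ∧ b (k + 2 + 2 * j) = 0)) ∧
       (¬ (∀ j : ℕ, b (k + 1 + 2 * j) = 0 ∧ (b (k + 2 + 2 * j) : ℤ) = cfa θ (k + 2 + 2 * j))) →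
        |σ| < |cftheta θ (k - 1)|) :=
  ostrowski_tail_bound_general θ hirr h0 b hb
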